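/- Let (C, S, W) be a category with strong and weak equivalences such that the localisation functor γ' : C[S⁻¹] → C[W⁻¹] admits a left adjoint λ. Then (C, S, W) is a left Cartan-Eilenberg category, and for each object X the counit ε'_X : λγ'(X) → X exhibits λγ'(X) as a cofibrant left model of X. -/

import Mathlib

open CategoryTheory

universe v u

variable {C : Type u} [Category.{v} C]

/-- `(C, S, W)` is a category with strong and weak equivalences. -/
structure StrongWeak (S W : MorphismProperty C) : Prop where
  comp_S : ∀ ⦃X Y Z : C⦄ (f : X ⟶ Y) (g : Y ⟶ Z), S f → S g → S (f ≫ g)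
  comp_W : ∀ ⦃X Y Z : C⦄ (f : X ⟶ Y) (g : Y ⟶ Z), W f → W g → W (f ≫ g)
  iso_S : ∀ ⦃X Y : C⦄ (f : X ⟶ Y), IsIso f → S f
  iso_W : ∀ ⦃X Y : C⦄ (f : X ⟶ Y), IsIso f → W f
  le_sat : ∀ ⦃X Y : C⦄ (f : X ⟶ Y), S f → IsIso (W.Q.map f)

/-- An object of `C[S⁻¹]` is `(S, W)`-cofibrant if for every `w : Y ⟶ X` in `W`,
composition with `w` induces a bijection on morphisms from it in `C[S⁻¹]`. -/
def CofibrantLoc (S W : MorphismProperty C) (M : S.Localization) : Prop :=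
  ∀ ⦃Y X : C⦄ (w : Y ⟶ X), W w →
    Function.Bijective (fun g : M ⟶ S.Q.obj Y => g ≫ S.Q.map w)

/-- The canonical functor `γ' : C[S⁻¹] ⥤ C[W⁻¹]`. -/
noncomputable def gammaPrime (S W : MorphismProperty C)
    (h : ∀ ⦃X Y : C⦄ (f : X ⟶ Y), S f → IsIso (W.Q.map f)) :
    S.Localization ⥤ W.Localization :=
  Localization.Construction.lift W.Q (fun _ _ f hf => h f hf)

/-! Every morphism of `W` becomes invertible under `γ'`, so through the adjunction
`Hom(λ d, -) ≅ Hom(d, γ' -)` it induces bijections on morphisms out of `λ d`: every object in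
the image of `λ` is cofibrant. Moreover `γ'` is a localisation functor (at the morphisms it
inverts), and a localisation functor with a left adjoint has an invertible unit
(Gabriel–Zisman); by the triangle identity `γ'(ε'_X)` is then inverse to the unit at `γ'(X)`. -/

namespace CategoryTheory.Adjunction

variable {D E : Type*} [Category* D] [Category* E] {G : E ⥤ D} {R : D ⥤ E}

lemma bijective_comp_of_isIso_map (adj : G ⊣ R) (e : E) {Y X : D} (f : Y ⟶ X)
    [IsIso (R.map f)] : Function.Bijective (fun g : G.obj e ⟶ Y => g ≫ f) := by
  let equiv := (adj.homEquiv e Y).trans <|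
    ((Iso.refl e).homCongr (asIso (R.map f))).trans (adj.homEquiv e X).symm
  convert equiv.bijective using 1
  ext g
  simp [equiv, ← homEquiv_naturality_right]

lemma isIso_unit_of_isLocalization (adj : G ⊣ R) (W : MorphismProperty D)
    [R.IsLocalization W] : IsIso adj.unit := by
  let θ : G ⋙ R ⟶ 𝟭 E := Localization.liftNatTrans R W (R ⋙ G ⋙ R) R (G ⋙ R) (𝟭 E)
    (Functor.whiskerRight adj.counit R)
  have hθ (d : D) : θ.app (R.obj d) = R.map (adj.counit.app d) := by
    simp [θ, Localization.liftNatTrans_app]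
  refine ⟨θ, Localization.natTrans_ext R W fun d => ?_, Localization.natTrans_ext R W fun d => ?_⟩
  · simp [hθ]
  · have h := θ.naturality (adj.unit.app (R.obj d))
    dsimp at h ⊢
    rw [← h, hθ, ← R.map_comp, left_triangle_components, R.map_id]

lemma isIso_map_counit_app_of_isLocalization (adj : G ⊣ R) (W : MorphismProperty D)
    [R.IsLocalization W] (d : D) : IsIso (R.map (adj.counit.app d)) := by
  have := adj.isIso_unit_of_isLocalization W
  rw [IsIso.eq_inv_of_hom_inv_id (adj.right_triangle_components d)]
  infer_instance

end CategoryTheory.Adjunction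

section gammaPrime

variable (S W : MorphismProperty C) (h : ∀ ⦃X Y : C⦄ (f : X ⟶ Y), S f → IsIso (W.Q.map f))

lemma gammaPrime_fac : S.Q ⋙ gammaPrime S W h = W.Q :=
  Localization.Construction.fac _ _

lemma isIso_gammaPrime_map {X Y : C} (w : X ⟶ Y) (hw : W w) :
    IsIso ((gammaPrime S W h).map (S.Q.map w)) := by
  have := Localization.inverts W.Q W w hw
  rwa [← gammaPrime_fac S W h] at this

noncomputable def gammaPrimeStrictUniversalProperty (T : Type*) [Category* T] :
    Localization.StrictUniversalPropertyFixedTarget (gammaPrime S W h)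
        ((MorphismProperty.isomorphisms _).inverseImage (gammaPrime S W h)) T where
  inverts _ _ _ hf := hf
  lift F hF := Localization.Construction.lift (S.Q ⋙ F) fun _ _ w hw =>
    hF _ (isIso_gammaPrime_map S W h w hw)
  fac F hF := Localization.Construction.uniq _ _ <| by
    rw [← Functor.assoc, gammaPrime_fac]
    exact Localization.Construction.fac _ _
  uniq F₁ F₂ eq := Localization.Construction.uniq _ _ <| by
    rw [← gammaPrime_fac S W h, Functor.assoc, eq, Functor.assoc]

instance gammaPrime_isLocalization : (gammaPrime S W h).IsLocalization
    ((MorphismProperty.isomorphisms _).inverseImage (gammaPrime S W h)) :=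
  .mk' _ _ (gammaPrimeStrictUniversalProperty S W h _)
    (gammaPrimeStrictUniversalProperty S W h _)

lemma cofibrantLoc_obj_of_adjunction {lam : W.Localization ⥤ S.Localization}
    (adj : lam ⊣ gammaPrime S W h) (d : W.Localization) : CofibrantLoc S W (lam.obj d) :=
  fun _ _ w hw =>
    have := isIso_gammaPrime_map S W h w hw
    adj.bijective_comp_of_isIso_map d (S.Q.map w)

end gammaPrime

/-- If the localisation functor `γ' : C[S⁻¹] ⥤ C[W⁻¹]` admits a left adjoint `λ`, then
`(C, S, W)` is a left Cartan-Eilenberg category: for each object `X`, the counit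
`ε'_X : λγ'(X) ⟶ X` exhibits `λγ'(X)` as a cofibrant left model of `X` (its source is
cofibrant and it becomes an isomorphism in `C[W⁻¹]`). -/
theorem leftCE_of_left_adjoint (S W : MorphismProperty C) (hsw : StrongWeak S W)
    (lam : W.Localization ⥤ S.Localization)
    (adj : lam ⊣ gammaPrime S W hsw.le_sat) :
    ∀ X : C,
      CofibrantLoc S W (lam.obj ((gammaPrime S W hsw.le_sat).obj (S.Q.obj X))) ∧
      IsIso ((gammaPrime S W hsw.le_sat).map (adj.counit.app (S.Q.obj X))) :=
  fun _ => ⟨cofibrantLoc_obj_of_adjunction S W hsw.le_sat adj _,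
    adj.isIso_map_counit_app_of_isLocalization
      ((MorphismProperty.isomorphisms _).inverseImage (gammaPrime S W hsw.le_sat)) _⟩
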